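/- In a directed-complete effect algebra, the only element a such that the n-fold sum na exists for all natural numbers n is a = 0. -/
import Mathlib


universe u

/-- `EAle orth add a b` : the effect-algebra order `a ≤ b` iff `∃ c, a ⊕ c = b`. -/
def EAle {α : Type u} (orth : α → α → Prop) (add : α → α → α) (a b : α) : Prop :=
  ∃ c, orth a c ∧ add a c = b

/-- An effect algebra: partial sum `add` (defined when `orth` holds), zero, complement. -/
structure EffectAlgebra (α : Type u) where
  orth : α → α → Prop
  add : α → α → α
  zero : α
  compl : α → α
  orth_comm : ∀ a b, orth a b → orth b a
  add_comm' : ∀ a b, orth a b → add a b = add b a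
  orth_zero : ∀ a, orth a zero
  add_zero' : ∀ a, add a zero = a
  orth_assoc₁ : ∀ a b c, orth a b → orth (add a b) c → orth b c
  orth_assoc₂ : ∀ a b c, orth a b → orth (add a b) c → orth a (add b c)
  add_assoc' : ∀ a b c, orth a b → orth (add a b) c → add (add a b) c = add a (add b c)
  orth_compl : ∀ a, orth a (compl a)
  add_compl : ∀ a, add a (compl a) = compl zero
  compl_unique : ∀ a b, orth a b → add a b = compl zero → b = compl a
  orth_one : ∀ a, orth a (compl zero) → a = zero

namespace EffectAlgebra
variable {α : Type u}
/-- The effect-algebra order. -/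
def le (E : EffectAlgebra α) : α → α → Prop := EAle E.orth E.add
/-- The unit `1 := 0⊥`. -/
def one (E : EffectAlgebra α) : α := E.compl E.zero
end EffectAlgebra

/-- A directed-complete effect algebra: every nonempty directed subset has a supremum. -/
structure DCEffectAlgebra (α : Type u) extends EffectAlgebra α where
  dSup : Set α → α
  dSup_upper : ∀ S : Set α, S.Nonempty → DirectedOn (EAle orth add) S →
    ∀ s ∈ S, EAle orth add s (dSup S)
  dSup_least : ∀ S : Set α, S.Nonempty → DirectedOn (EAle orth add) S →
    ∀ b, (∀ s ∈ S, EAle orth add s b) → EAle orth add (dSup S) b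

namespace EffectAlgebra

variable {α : Type u} (E : EffectAlgebra α)

lemma le_refl' (a : α) : EAle E.orth E.add a a :=
  ⟨E.zero, E.orth_zero a, E.add_zero' a⟩

lemma le_trans' {a b c : α} (h1 : EAle E.orth E.add a b) (h2 : EAle E.orth E.add b c) :
    EAle E.orth E.add a c := by
  obtain ⟨x, hx, rfl⟩ := h1
  obtain ⟨y, hy, rfl⟩ := h2
  exact ⟨E.add x y, E.orth_assoc₂ a x y hx hy, (E.add_assoc' a x y hx hy).symm⟩

lemma compl_compl' (a : α) : E.compl (E.compl a) = a := by
  have ho : E.orth (E.compl a) a := E.orth_comm a _ (E.orth_compl a)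
  exact (E.compl_unique (E.compl a) a ho
    (by rw [E.add_comm' _ _ ho]; exact E.add_compl a)).symm

lemma cancel {a b c : α} (hb : E.orth a b) (hc : E.orth a c)
    (h : E.add a b = E.add a c) : b = c := by
  set x := E.compl (E.add a b) with hx
  have hox : E.orth (E.add a b) x := E.orth_compl _
  have hax : E.add (E.add a b) x = E.compl E.zero := E.add_compl _
  have hba : E.orth b a := E.orth_comm _ _ hb
  have h1 : E.orth (E.add b a) x := by rw [E.add_comm' b a hba]; exact hox
  have h2 : E.orth b (E.add a x) := E.orth_assoc₂ b a x hba h1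
  have h3 : E.add b (E.add a x) = E.compl E.zero := by
    rw [← E.add_assoc' b a x hba h1, E.add_comm' b a hba]; exact hax
  have hbc : E.add a x = E.compl b := E.compl_unique b _ h2 h3
  have hca : E.orth c a := E.orth_comm _ _ hc
  have hox' : E.orth (E.add a c) x := by rw [← h]; exact hox
  have h1' : E.orth (E.add c a) x := by rw [E.add_comm' c a hca]; exact hox'
  have h2' : E.orth c (E.add a x) := E.orth_assoc₂ c a x hca h1'
  have h3' : E.add c (E.add a x) = E.compl E.zero := by
    rw [← E.add_assoc' c a x hca h1', E.add_comm' c a hca, ← h]; exact hax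
  have hcc : E.add a x = E.compl c := E.compl_unique c _ h2' h3'
  have hbcc : E.compl b = E.compl c := by rw [← hbc, hcc]
  calc b = E.compl (E.compl b) := (E.compl_compl' b).symm
    _ = E.compl (E.compl c) := by rw [hbcc]
    _ = c := E.compl_compl' c

lemma pos {a b : α} (ho : E.orth a b) (h : E.add a b = E.zero) : a = E.zero := by
  have h1 : E.orth (E.add a b) (E.compl E.zero) := by
    have h2 := E.orth_compl (E.add a b)
    rwa [show E.compl (E.add a b) = E.compl E.zero from congrArg E.compl h] at h2
  have hb0 : b = E.zero := E.orth_one b (E.orth_assoc₁ a b _ ho h1)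
  rw [hb0, E.add_zero'] at h
  exact h

end EffectAlgebra

/-- In a directed-complete effect algebra, the only element whose `n`-fold sum
exists for all `n` is zero.  (Here `f n` is the `(n+1)`-fold sum of `a`.) -/
theorem dcea_no_infinitesimals {α : Type u} (E : DCEffectAlgebra α) (a : α)
    (f : ℕ → α) (h0 : f 0 = a)
    (h : ∀ n, E.orth (f n) a ∧ f (n + 1) = E.add (f n) a) :
    a = E.zero := by
  set Ea := E.toEffectAlgebra with hEa
  have hstep : ∀ n, EAle Ea.orth Ea.add (f n) (f (n + 1)) :=
    fun n => ⟨a, (h n).1, ((h n).2).symm⟩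
  have fmono : ∀ m n, m ≤ n → EAle Ea.orth Ea.add (f m) (f n) := by
    intro m n hmn
    induction n, hmn using Nat.le_induction with
    | base => exact Ea.le_refl' (f m)
    | succ n hmn ih => exact Ea.le_trans' ih (hstep n)
  set S := Set.range f with hS
  have hne : S.Nonempty := ⟨f 0, ⟨0, rfl⟩⟩
  have hdir : DirectedOn (EAle Ea.orth Ea.add) S := by
    rintro _ ⟨m, rfl⟩ _ ⟨n, rfl⟩
    exact ⟨f (max m n), ⟨max m n, rfl⟩, fmono m _ (le_max_left m n),
      fmono n _ (le_max_right m n)⟩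
  set s := E.dSup S with hs
  have hupper : ∀ n, EAle Ea.orth Ea.add (f n) s :=
    fun n => E.dSup_upper S hne hdir (f n) ⟨n, rfl⟩
  -- a ≤ s : get d with a ⊕ d = s
  obtain ⟨d, hd, hds⟩ : EAle Ea.orth Ea.add a s := h0 ▸ hupper 0
  -- each f n ≤ d
  have hfd : ∀ n, EAle Ea.orth Ea.add (f n) d := by
    intro n
    obtain ⟨c, hc, hcs⟩ := hupper (n + 1)
    rw [(h n).2] at hc hcs
    have hna : Ea.orth (f n) a := (h n).1
    have han : Ea.orth a (f n) := Ea.orth_comm _ _ hna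
    have hc' : Ea.orth (Ea.add a (f n)) c := by
      rw [← Ea.add_comm' (f n) a hna]; exact hc
    have hcs' : Ea.add a (Ea.add (f n) c) = Ea.add a d := by
      rw [← Ea.add_assoc' a (f n) c han hc', Ea.add_comm' a (f n) han, hcs, ← hds]
    have horth : Ea.orth a (Ea.add (f n) c) := Ea.orth_assoc₂ a (f n) c han hc'
    have : Ea.add (f n) c = d := Ea.cancel horth hd hcs'
    exact ⟨c, Ea.orth_assoc₁ a (f n) c han hc', this⟩
  -- so s ≤ d
  obtain ⟨e, he, hed⟩ : EAle Ea.orth Ea.add s d := by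
    apply E.dSup_least S hne hdir
    rintro _ ⟨n, rfl⟩
    exact hfd n
  -- a ⊕ (s ⊕ e) = s
  have key : Ea.add (Ea.add s e) a = s := by
    rw [hed, ← Ea.add_comm' a d hd]; exact hds
  have hsea : Ea.orth (Ea.add s e) a := by
    have hda := Ea.orth_comm a d hd
    rw [hed]; exact hda
  have h1 : Ea.orth s (Ea.add e a) := Ea.orth_assoc₂ s e a he hsea
  have h2 : Ea.add s (Ea.add e a) = Ea.add s Ea.zero := by
    rw [← Ea.add_assoc' s e a he hsea, key, Ea.add_zero']
  have hea : Ea.add e a = Ea.zero := Ea.cancel h1 (Ea.orth_zero s) h2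
  have hoea : Ea.orth e a := Ea.orth_assoc₁ s e a he hsea
  have : Ea.add a e = Ea.zero := by rw [← Ea.add_comm' e a hoea]; exact hea
  exact Ea.pos (Ea.orth_comm e a hoea) this
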